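/- Telescoping jump formula for ENO interpolation: with the setup of ENO interpolation (point values v_i, stencil offsets r̃_p for point x_0 and ñ_p for point x_1, with r̃_p ≤ ñ_p), the midpoint jump satisfies v⁺_{1/2} − v⁻_{1/2} = Σ_{r=r̃_p}^{ñ_p} v[x_r,...,x_{r+p}] · (x_{r+p} − x_r) · Π_{m=1}^{p−1} (x_{1/2} − x_{r+m}), where x_{1/2} = (x_0 + x_1)/2. -/

import Mathlib

/-- Divided differences of the data `V` at the points `x`:
`dd x V j i = V[x_i, ..., x_{i+j}]`. -/
noncomputable def dd (x V : ℤ → ℝ) : ℕ → ℤ → ℝ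
  | 0, i => V i
  | j + 1, i => (dd x V j (i + 1) - dd x V j i) / (x (i + (j : ℤ) + 1) - x i)

/-- ENO interpolation stencil offsets for the grid point `x_i`:
`enoOffsetI x v i j` is the left offset `r_j` of the `j`-point stencil
`{x_{i+r_j}, ..., x_{i+r_j+j-1}}` chosen by the ENO selection procedure applied to
point values `v` at points `x`. -/
noncomputable def enoOffsetI (x v : ℤ → ℝ) (i : ℤ) : ℕ → ℤ
  | 0 => 0
  | 1 => 0
  | j + 2 =>
    let r := enoOffsetI x v i (j + 1)
    if |dd x v (j + 1) (i + r - 1)| < |dd x v (j + 1) (i + r)| then r - 1 else r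

/-!
Adding a node `k` to a node set `s` changes the interpolant by a constant multiple of the nodal
polynomial of `s`, the constant being the top coefficient of the larger interpolant. Applied to
the two `p`-point windows inside the `(p+1)`-point window starting at `x_r`, this gives
`P_{r+1} - P_r = c (x_{r+p} - x_r) ∏_{m=1}^{p-1} (X - x_{r+m})`; comparing top coefficients in the
same identity is Newton's recursion, so `c = v[x_r, ..., x_{r+p}]`. Summing over `r` from `r̃_p` to
`ñ_p` telescopes to the jump.
-/

open Finset Polynomial Lagrange

theorem Int.sum_Icc_sub {M : Type*} [AddCommGroup M] (f : ℤ → M) {a b : ℤ}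
    (hab : a ≤ b + 1) :
    ∑ i ∈ Icc a b, (f (i + 1) - f i) = f (b + 1) - f a := by
  obtain ⟨n, rfl⟩ : ∃ n : ℕ, b = a - 1 + n := ⟨(b - (a - 1)).toNat, by omega⟩
  induction n with
  | zero => simp
  | succ n ih =>
    rw [Nat.cast_succ, ← add_assoc, ← insert_Icc_right_eq_Icc_add_one (by omega),
      sum_insert (by simp), ih (by omega)]
    abel

theorem Int.prod_Icc_one_natCast_add {M : Type*} [CommMonoid M] (f : ℤ → M) (r : ℤ)
    (n : ℕ) :
    ∏ m ∈ Icc 1 n, f (r + m) = ∏ k ∈ Icc (r + 1) (r + n), f k := by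
  refine prod_nbij' (fun m ↦ r + m) (fun k ↦ (k - r).toNat) ?_ ?_ ?_ ?_ (fun _ _ ↦ rfl) <;>
    intro m hm <;> simp only [mem_Icc] at hm ⊢ <;> omega

section Interpolation

variable {F ι : Type*} [Field F] [DecidableEq ι]

theorem Lagrange.interpolate_insert_sub_interpolate {s : Finset ι} {x : ι → F} (r : ι → F)
    {k : ι} (hx : Set.InjOn x ↑(insert k s)) (hk : k ∉ s) :
    interpolate (insert k s) x r - interpolate s x r =
      C ((interpolate (insert k s) x r).coeff #s) * nodal s x := by
  have hxs : Set.InjOn x s := hx.mono (by simp)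
  rw [← sub_eq_zero]
  refine eq_zero_of_degree_lt_of_eval_index_eq_zero s hxs ?_ fun i hi ↦ ?_
  · have hP := degree_interpolate_lt r hx
    have hQ := degree_interpolate_lt r hxs
    rw [card_insert_of_notMem hk, degree_lt_iff_coeff_zero] at hP
    rw [degree_lt_iff_coeff_zero] at hQ ⊢
    intro m hm
    replace hm : #s ≤ m := by exact_mod_cast hm
    rw [coeff_sub, coeff_sub, coeff_C_mul, hQ m (by exact_mod_cast hm)]
    rcases hm.eq_or_lt with rfl | hlt
    · rw [← natDegree_nodal (s := s) (v := x), nodal_monic.coeff_natDegree]; ring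
    · rw [hP m (by exact_mod_cast hlt),
        coeff_eq_zero_of_natDegree_lt (p := nodal s x) (by rwa [natDegree_nodal])]
      ring
  · rw [eval_sub, eval_sub, eval_mul, eval_interpolate_at_node r hx (mem_insert_of_mem hi),
      eval_interpolate_at_node r hxs hi, eval_nodal_at_node hi, mul_zero, sub_self, sub_zero]

theorem Lagrange.interpolate_Icc_add_one_sub_interpolate_Icc {x : ℤ → F}
    (hx : Function.Injective x) (v : ℤ → F) (i : ℤ) (n : ℕ) :
    interpolate (Icc (i + 1) (i + 1 + n)) x v - interpolate (Icc i (i + n)) x v =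
      C ((interpolate (Icc i (i + n + 1)) x v).coeff (n + 1) * (x (i + n + 1) - x i)) *
        nodal (Icc (i + 1) (i + n)) x := by
  have h_window_left : insert (i + n + 1) (Icc i (i + n)) = Icc i (i + n + 1) :=
    insert_Icc_right_eq_Icc_add_one (by omega)
  have h_window_right : insert i (Icc (i + 1) (i + 1 + n)) = Icc i (i + n + 1) := by
    rw [add_right_comm]; exact insert_Icc_add_one_left_eq_Icc (by omega)
  have h_left := interpolate_insert_sub_interpolate (s := Icc i (i + n)) (k := i + n + 1) v
    hx.injOn (by simp only [mem_Icc]; omega)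
  have h_right := interpolate_insert_sub_interpolate (s := Icc (i + 1) (i + 1 + n)) (k := i) v
    hx.injOn (by simp only [mem_Icc]; omega)
  have h_nodal_left : nodal (Icc i (i + n)) x = (X - C (x i)) * nodal (Icc (i + 1) (i + n)) x := by
    rw [← nodal_insert_eq_nodal (by simp only [mem_Icc]; omega),
      insert_Icc_add_one_left_eq_Icc (by omega)]
  have h_nodal_right : nodal (Icc (i + 1) (i + 1 + n)) x =
      (X - C (x (i + n + 1))) * nodal (Icc (i + 1) (i + n)) x := by
    rw [← nodal_insert_eq_nodal (by simp only [mem_Icc]; omega),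
      insert_Icc_right_eq_Icc_add_one (by omega), add_right_comm]
  rw [h_window_left, Int.card_Icc, h_nodal_left, show (i + n + 1 - i).toNat = n + 1 by omega]
    at h_left
  rw [h_window_right, Int.card_Icc, h_nodal_right,
    show (i + 1 + n + 1 - (i + 1)).toNat = n + 1 by omega] at h_right
  rw [C_mul, C_sub]
  linear_combination h_left - h_right

end Interpolation

theorem Lagrange.coeff_interpolate_Icc_eq_dd {x : ℤ → ℝ} (hx : Function.Injective x)
    (v : ℤ → ℝ) (n : ℕ) (i : ℤ) :
    (interpolate (Icc i (i + n)) x v).coeff n = dd x v n i := by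
  induction n generalizing i with
  | zero => simp [dd]
  | succ n ih =>
    have h := congrArg (coeff · n) (interpolate_Icc_add_one_sub_interpolate_Icc hx v i n)
    have h_monic : (nodal (Icc (i + 1) (i + n)) x).coeff n = 1 := by
      have h := (nodal_monic (s := Icc (i + 1) (i + n)) (v := x)).coeff_natDegree
      rwa [natDegree_nodal, Int.card_Icc, show (i + n + 1 - (i + 1)).toNat = n by omega] at h
    simp only [coeff_sub, coeff_C_mul, ih, h_monic, mul_one] at h
    rw [Nat.cast_succ, ← add_assoc, dd, eq_div_iff (sub_ne_zero.2 (hx.ne (by omega)))]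
    linear_combination h.symm

theorem Lagrange.interpolate_Icc_add_one_sub_interpolate_Icc_eq_dd {x : ℤ → ℝ}
    (hx : Function.Injective x) (v : ℤ → ℝ) (i : ℤ) (n : ℕ) :
    interpolate (Icc (i + 1) (i + 1 + n)) x v - interpolate (Icc i (i + n)) x v =
      C (dd x v (n + 1) i * (x (i + n + 1) - x i)) * nodal (Icc (i + 1) (i + n)) x := by
  have h_coeff := coeff_interpolate_Icc_eq_dd hx v (n + 1) i
  rw [Nat.cast_succ, ← add_assoc] at h_coeff
  rw [interpolate_Icc_add_one_sub_interpolate_Icc hx, h_coeff]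

/-- telescoping jump formula for ENO interpolation at the midpoint
`x_{1/2} = (x_0 + x_1)/2`. -/
theorem eno_interpolation_telescoping (p : ℕ) (hp : 1 ≤ p) (x v : ℤ → ℝ)
    (hx : StrictMono x)
    (hrs : enoOffsetI x v 0 p ≤ enoOffsetI x v 1 p) :
    (Lagrange.interpolate (Finset.Icc (1 + enoOffsetI x v 1 p)
        (1 + enoOffsetI x v 1 p + ((p - 1 : ℕ) : ℤ))) x v).eval ((x 0 + x 1) / 2) -
    (Lagrange.interpolate (Finset.Icc (enoOffsetI x v 0 p)
        (enoOffsetI x v 0 p + ((p - 1 : ℕ) : ℤ))) x v).eval ((x 0 + x 1) / 2) =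
      ∑ r ∈ Finset.Icc (enoOffsetI x v 0 p) (enoOffsetI x v 1 p),
        dd x v p r * (x (r + p) - x r) *
          ∏ m ∈ Finset.Icc 1 (p - 1), ((x 0 + x 1) / 2 - x (r + m)) := by
  obtain ⟨n, rfl⟩ : ∃ n, p = n + 1 := ⟨p - 1, by omega⟩
  set y := (x 0 + x 1) / 2
  set windowValue : ℤ → ℝ := fun r ↦ (interpolate (Icc r (r + n)) x v).eval y
  have h_step (r : ℤ) : dd x v (n + 1) r * (x (r + (n + 1 : ℕ)) - x r) *
      ∏ m ∈ Icc 1 (n + 1 - 1), (y - x (r + m)) = windowValue (r + 1) - windowValue r := by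
    rw [Nat.add_sub_cancel, ← eval_sub,
      interpolate_Icc_add_one_sub_interpolate_Icc_eq_dd hx.injective, eval_mul, eval_C, eval_nodal,
      Int.prod_Icc_one_natCast_add (fun k ↦ y - x k), Nat.cast_succ, ← add_assoc]
  rw [sum_congr rfl fun r _ ↦ h_step r, Int.sum_Icc_sub windowValue (by omega),
    Nat.add_sub_cancel, add_comm 1]
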